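/- arXiv:1103.3240 — 2 statements merged into one kernel-verified Lean document; each statement's English description precedes it below -/
import Mathlib

section
/- For any CSP (with N variables over a finite domain D, and clauses Φ_1,...,Φ_M) that admits a satisfying assignment, the CFL algorithm's stopping time τ = inf{t ≥ 0 : X(t) is a satisfying assignment} is finite almost surely. -/
open MeasureTheory Finset

/-- Variable `i` participates in clause `m` if its value can influence the
clause's satisfaction for some assignment of the other variables. -/
def participates {N M D : ℕ} (Φ : Fin M → (Fin N → Fin D) → Bool)
    (i : Fin N) (m : Fin M) : Prop :=
  ∃ x y : Fin N → Fin D, (∀ j, j ≠ i → x j = y j) ∧ Φ m x ≠ Φ m y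

/-- All clauses in which variable `i` participates are satisfied by `x`. -/
def varSat {N M D : ℕ} (Φ : Fin M → (Fin N → Fin D) → Bool)
    (i : Fin N) (x : Fin N → Fin D) : Prop :=
  ∀ m : Fin M, participates Φ i m → Φ m x = true

/-- `x` is a satisfying assignment: all clauses evaluate to `true`. -/
def satAll {N M D : ℕ} (Φ : Fin M → (Fin N → Fin D) → Bool)
    (x : Fin N → Fin D) : Prop :=
  ∀ m : Fin M, Φ m x = true

open Classical in
/-- The (deterministic) CFL probability vectors along a given history `h` of
variable assignments: start uniform; if variable `i` is satisfied at step `t`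
collapse to a point mass at its current value, otherwise apply the
interpolation update with parameters `a, b`. -/
noncomputable def cflVec (a b : ℝ) {N M D : ℕ}
    (Φ : Fin M → (Fin N → Fin D) → Bool) (h : ℕ → Fin N → Fin D) :
    ℕ → Fin N → Fin D → ℝ
  | 0 => fun _ _ => 1 / (D : ℝ)
  | t + 1 => fun i j =>
      if varSat Φ i (h t) then (if j = h t i then 1 else 0)
      else (1 - b) * cflVec a b Φ h t i j +
        (if j = h t i then a else b) / ((D : ℝ) - 1 + a / b)

/-!
Fix a satisfying assignment `xs`. From any assignment `z`, the move `repair Φ xs` that keeps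
every variable whose clauses are all satisfied and resets every other variable to its value in
`xs` reaches a satisfying assignment within `N` steps: an unsatisfied clause has a participating
variable that disagrees with `xs`, that variable is reset, and agreement with `xs` is never lost.
Whatever the history, CFL makes this move with probability at least `γ ^ N`, where
`γ = min a b / (D - 1 + a / b)`: a satisfied variable keeps its value, and an unsatisfied one
puts mass at least `γ` on every value. So from every history a satisfying assignment is hit
within `N` more steps with probability at least `γ ^ (N * N)`, and the probability of avoiding
satisfying assignments up to time `k * N` is at most `(1 - γ ^ (N * N)) ^ k`.
-/

open scoped ENNReal

section Repair

variable {N M D : ℕ} {Φ : Fin M → (Fin N → Fin D) → Bool}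

open Classical in
noncomputable def repair (Φ : Fin M → (Fin N → Fin D) → Bool) (xs z : Fin N → Fin D) :
    Fin N → Fin D :=
  fun i => if varSat Φ i z then z i else xs i

theorem exists_participates_ne_of_ne {m : Fin M} {u v : Fin N → Fin D}
    (huv : Φ m u ≠ Φ m v) : ∃ j, participates Φ j m ∧ u j ≠ v j := by
  classical
  -- Move `u` to `v` one coordinate at a time: the first move that changes `Φ m` is at a
  -- participating variable.
  suffices H : ∀ (s : Finset (Fin N)) (u : Fin N → Fin D), (∀ j ∉ s, u j = v j) →
      Φ m u ≠ Φ m v → ∃ j, participates Φ j m ∧ u j ≠ v j from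
    H univ u (by simp) huv
  intro s
  induction s using Finset.induction_on with
  | empty =>
    intro u hu huv
    exact absurd (congrArg (Φ m) (funext fun j => hu j (notMem_empty j))) huv
  | insert i s _ ih =>
    intro u hu huv
    by_cases hchange : Φ m (Function.update u i (v i)) = Φ m u
    · have hu' : ∀ j ∉ s, Function.update u i (v i) j = v j := fun j hj => by
        by_cases hji : j = i
        · simp [hji]
        · rw [Function.update_of_ne hji]
          exact hu j (by simp [hji, hj])
      obtain ⟨j, hj, hne⟩ := ih _ hu' (hchange ▸ huv)
      have hji : j ≠ i := by rintro rfl; simp at hne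
      exact ⟨j, hj, by rwa [Function.update_of_ne hji] at hne⟩
    · have hui : u i ≠ v i := fun h => hchange (by simp [← h])
      exact ⟨i, ⟨_, u, fun j hj => Function.update_of_ne hj _ _, hchange⟩, hui⟩

theorem repair_of_satAll {xs z : Fin N → Fin D} (hz : satAll Φ z) : repair Φ xs z = z :=
  funext fun _ => if_pos fun m _ => hz m

theorem card_agree_lt_card_agree_repair {xs z : Fin N → Fin D} (hxs : satAll Φ xs)
    (hz : ¬ satAll Φ z) :
    #{i | z i = xs i} < #{i | repair Φ xs z i = xs i} := by
  classical
  obtain ⟨m, hm⟩ : ∃ m, Φ m z ≠ true := by simpa [satAll] using hz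
  obtain ⟨j, hj, hne⟩ := exists_participates_ne_of_ne (hxs m ▸ hm : Φ m z ≠ Φ m xs)
  have hunsat : ¬ varSat Φ j z := fun h => hm (h m hj)
  refine card_lt_card ⟨fun i hi => ?_, fun hsub => ?_⟩
  · simp only [mem_filter, mem_univ, true_and] at hi ⊢
    by_cases hv : varSat Φ i z <;> simp [repair, hv, hi]
  · have := hsub (mem_filter.2 ⟨mem_univ j, by simp [repair, hunsat]⟩)
    simp [hne] at this

theorem satAll_repair_iterate {xs : Fin N → Fin D} (hxs : satAll Φ xs) (z : Fin N → Fin D) :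
    satAll Φ ((repair Φ xs)^[N] z) := by
  have key : ∀ n, satAll Φ ((repair Φ xs)^[n] z) ∨
      n ≤ #{i | (repair Φ xs)^[n] z i = xs i} := by
    intro n
    induction n with
    | zero => exact Or.inr (Nat.zero_le _)
    | succ n ih =>
      rw [Function.iterate_succ_apply']
      by_cases hs : satAll Φ ((repair Φ xs)^[n] z)
      · exact Or.inl ((repair_of_satAll hs).symm ▸ hs)
      · have hgrow := card_agree_lt_card_agree_repair hxs hs
        have hcount := ih.resolve_left hs
        exact Or.inr (by omega)
  refine (key N).elim id fun hN => ?_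
  have hcard : #{i | (repair Φ xs)^[N] z i = xs i} = #(univ : Finset (Fin N)) :=
    le_antisymm (card_filter_le _ _) (by simpa using hN)
  have hagree : ∀ i, (repair Φ xs)^[N] z i = xs i := fun i =>
    card_filter_eq_iff.1 hcard i (mem_univ i)
  rwa [funext hagree]

end Repair

section Floor

variable {N M D : ℕ} {a b : ℝ} {Φ : Fin M → (Fin N → Fin D) → Bool}

noncomputable def cflFloor (a b : ℝ) (D : ℕ) : ℝ := min a b / ((D : ℝ) - 1 + a / b)

theorem cfl_denom_pos (hD : 0 < D) (ha : 0 < a) (hb : 0 < b) : 0 < (D : ℝ) - 1 + a / b := by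
  have : (1 : ℝ) ≤ D := by exact_mod_cast hD
  linarith [div_pos ha hb]

theorem cflFloor_pos (hD : 0 < D) (ha : 0 < a) (hb : 0 < b) : 0 < cflFloor a b D :=
  div_pos (lt_min ha hb) (cfl_denom_pos hD ha hb)

theorem cflFloor_le_one (hD : 0 < D) (ha : 0 < a) (hb : 0 < b) (hb1 : b ≤ 1) :
    cflFloor a b D ≤ 1 := by
  rw [cflFloor, div_le_one (cfl_denom_pos hD ha hb)]
  have : (1 : ℝ) ≤ D := by exact_mod_cast hD
  have : a ≤ a / b := (le_div_iff₀ hb).2 (by nlinarith)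
  linarith [min_le_left a b]

theorem cflVec_nonneg (hD : 0 < D) (ha : 0 < a) (hb : 0 < b) (hb1 : b ≤ 1)
    (h : ℕ → Fin N → Fin D) (t : ℕ) (i : Fin N) (j : Fin D) : 0 ≤ cflVec a b Φ h t i j := by
  induction t generalizing j with
  | zero => simp only [cflVec]; positivity
  | succ t ih =>
    have hden := cfl_denom_pos hD ha hb
    simp only [cflVec]
    split_ifs <;> first
      | exact add_nonneg (mul_nonneg (by linarith) (ih j)) (div_nonneg (by linarith) hden.le)
      | norm_num

theorem cflFloor_le_cflVec_of_not_varSat (hD : 0 < D) (ha : 0 < a) (hb : 0 < b) (hb1 : b ≤ 1)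
    {h : ℕ → Fin N → Fin D} {t : ℕ} {i : Fin N} (hi : ¬ varSat Φ i (h t)) (j : Fin D) :
    cflFloor a b D ≤ cflVec a b Φ h (t + 1) i j := by
  have hpush : cflFloor a b D ≤ (if j = h t i then a else b) / ((D : ℝ) - 1 + a / b) := by
    refine div_le_div_of_nonneg_right ?_ (cfl_denom_pos hD ha hb).le
    split_ifs
    exacts [min_le_left a b, min_le_right a b]
  have hkeep : 0 ≤ (1 - b) * cflVec a b Φ h t i j :=
    mul_nonneg (by linarith) (cflVec_nonneg hD ha hb hb1 h t i j)
  simp only [cflVec, if_neg hi]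
  linarith

theorem cflFloor_le_cflVec_repair (hD : 0 < D) (ha : 0 < a) (hb : 0 < b) (hb1 : b ≤ 1)
    (xs : Fin N → Fin D) (h : ℕ → Fin N → Fin D) (t : ℕ) (i : Fin N) :
    cflFloor a b D ≤ cflVec a b Φ h (t + 1) i (repair Φ xs (h t) i) := by
  by_cases hi : varSat Φ i (h t)
  · simpa [cflVec, repair, hi] using cflFloor_le_one hD ha hb hb1
  · exact cflFloor_le_cflVec_of_not_varSat hD ha hb hb1 hi _

theorem cflFloor_pow_le_prod_cflVec_repair (hD : 0 < D) (ha : 0 < a) (hb : 0 < b)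
    (hb1 : b ≤ 1) (xs : Fin N → Fin D) (h : ℕ → Fin N → Fin D) (t : ℕ) :
    cflFloor a b D ^ N ≤ ∏ i, cflVec a b Φ h (t + 1) i (repair Φ xs (h t) i) := by
  calc cflFloor a b D ^ N = ∏ _i : Fin N, cflFloor a b D := by simp
    _ ≤ _ := prod_le_prod (fun _ _ => (cflFloor_pos hD ha hb).le)
      fun i _ => cflFloor_le_cflVec_repair hD ha hb hb1 xs h t i

end Floor

section Hitting

variable {Ω S : Type*} {X : ℕ → Ω → S}

def pathCylinder (X : ℕ → Ω → S) (t : ℕ) (h : ℕ → S) : Set Ω := {ω | ∀ s ≤ t, X s ω = h s}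

def avoidUntil (X : ℕ → Ω → S) (G : Set S) (t : ℕ) : Set Ω := {ω | ∀ s ≤ t, X s ω ∉ G}

def followFrom (F : S → S) (t : ℕ) (h : ℕ → S) : ℕ → S :=
  fun s => if s ≤ t then h s else F^[s - t] (h t)

theorem followFrom_of_le {F : S → S} {t s : ℕ} (h : ℕ → S) (hs : s ≤ t) :
    followFrom F t h s = h s :=
  if_pos hs

theorem followFrom_add (F : S → S) (t : ℕ) (h : ℕ → S) (n : ℕ) :
    followFrom F t h (t + n) = F^[n] (h t) := by
  rcases n with _ | n
  · simp [followFrom]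
  · simp [followFrom, show ¬ t + (n + 1) ≤ t by omega]

theorem pathCylinder_congr {t : ℕ} {h h' : ℕ → S} (hh : ∀ s ≤ t, h s = h' s) :
    pathCylinder X t h = pathCylinder X t h' := by
  ext ω
  exact forall₂_congr fun s hs => by rw [hh s hs]

theorem pathCylinder_succ (t : ℕ) (h : ℕ → S) :
    pathCylinder X (t + 1) h = {ω | X (t + 1) ω = h (t + 1)} ∩ pathCylinder X t h := by
  ext ω
  simp only [pathCylinder, Set.mem_ofPred_eq, Set.mem_inter_iff]
  constructor
  · intro hω
    exact ⟨hω _ le_rfl, fun s hs => hω s (by omega)⟩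
  · rintro ⟨hlast, hω⟩ s hs
    rcases Nat.lt_or_eq_of_le hs with hs | rfl
    exacts [hω s (by omega), hlast]

variable [MeasurableSpace Ω] {μ : Measure Ω}

theorem measurableSet_pathCylinder [MeasurableSpace S] [MeasurableSingletonClass S]
    (hX : ∀ t, Measurable (X t)) (t : ℕ) (h : ℕ → S) : MeasurableSet (pathCylinder X t h) := by
  simp only [pathCylinder, Set.ofPred_forall]
  exact .iInter fun s => .iInter fun _ => hX s (measurableSet_singleton _)

variable {F : S → S} {g : ℝ≥0∞}

theorem pow_mul_measure_pathCylinder_le_followFrom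
    (hF : ∀ t h, g * μ (pathCylinder X t h) ≤ μ ({ω | X (t + 1) ω = F (h t)} ∩ pathCylinder X t h))
    (t : ℕ) (h : ℕ → S) (n : ℕ) :
    g ^ n * μ (pathCylinder X t h) ≤ μ (pathCylinder X (t + n) (followFrom F t h)) := by
  induction n with
  | zero => rw [pow_zero, one_mul, add_zero, pathCylinder_congr fun s hs => followFrom_of_le h hs]
  | succ n ih =>
    have hnext : followFrom F t h (t + n + 1) = F (followFrom F t h (t + n)) := by
      rw [add_assoc, followFrom_add, followFrom_add, Function.iterate_succ_apply']
    calc g ^ (n + 1) * μ (pathCylinder X t h) = g * (g ^ n * μ (pathCylinder X t h)) := by ring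
      _ ≤ g * μ (pathCylinder X (t + n) (followFrom F t h)) := by gcongr
      _ ≤ _ := hF _ _
      _ = μ (pathCylinder X (t + (n + 1)) (followFrom F t h)) := by
        rw [← add_assoc, pathCylinder_succ, hnext]

variable [MeasurableSpace S] [MeasurableSingletonClass S] {G : Set S} {n : ℕ}

theorem measure_avoidUntil_inter_pathCylinder_le [IsFiniteMeasure μ] (hX : ∀ t, Measurable (X t))
    (hF : ∀ t h, g * μ (pathCylinder X t h) ≤ μ ({ω | X (t + 1) ω = F (h t)} ∩ pathCylinder X t h))
    (hFG : ∀ z, F^[n] z ∈ G) (t : ℕ) (h : ℕ → S) :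
    μ (avoidUntil X G (t + n) ∩ pathCylinder X t h) ≤ (1 - g ^ n) * μ (pathCylinder X t h) := by
  set C := pathCylinder X t h
  set C' := pathCylinder X (t + n) (followFrom F t h)
  have hC'C : C' ⊆ C := fun ω hω s hs =>
    (hω s (by omega)).trans (followFrom_of_le h hs)
  have hsub : avoidUntil X G (t + n) ∩ C ⊆ C \ C' := fun ω ⟨hA, hC⟩ =>
    ⟨hC, fun hC' => hA (t + n) le_rfl (by rw [hC' _ le_rfl, followFrom_add]; exact hFG _)⟩
  calc μ (avoidUntil X G (t + n) ∩ C) ≤ μ (C \ C') := measure_mono hsub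
    _ = μ C - μ C' :=
      measure_sdiff hC'C (measurableSet_pathCylinder hX _ _).nullMeasurableSet (measure_ne_top _ _)
    _ ≤ μ C - g ^ n * μ C :=
      tsub_le_tsub_left (pow_mul_measure_pathCylinder_le_followFrom hF t h n) _
    _ = (1 - g ^ n) * μ C := by rw [ENNReal.sub_mul fun _ _ => measure_ne_top _ _, one_mul]

theorem measure_avoidUntil_add_le [IsFiniteMeasure μ] [Fintype S] (hX : ∀ t, Measurable (X t))
    (hF : ∀ t h, g * μ (pathCylinder X t h) ≤ μ ({ω | X (t + 1) ω = F (h t)} ∩ pathCylinder X t h))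
    (hFG : ∀ z, F^[n] z ∈ G) (t : ℕ) :
    μ (avoidUntil X G (t + n)) ≤ (1 - g ^ n) * μ (avoidUntil X G t) := by
  classical
  let past : Ω → Fin (t + 1) → S := fun ω s => X s ω
  let W : Finset (Fin (t + 1) → S) := {w | ∀ s, w s ∉ G}
  have hfiber : ∀ w, past ⁻¹' {w} = pathCylinder X t (fun s => w ⟨min s t, by omega⟩) := by
    intro w
    ext ω
    simp only [Set.mem_preimage, Set.mem_singleton_iff, pathCylinder, Set.mem_ofPred_eq, funext_iff,
      past]
    refine ⟨fun hω s hs => by simpa [min_eq_left hs] using hω ⟨s, by omega⟩, fun hω s => ?_⟩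
    simpa [min_eq_left (Nat.le_of_lt_succ s.2)] using hω s (Nat.le_of_lt_succ s.2)
  have hpast : avoidUntil X G t = past ⁻¹' W := by
    ext ω
    simp only [avoidUntil, Set.mem_ofPred_eq, Set.mem_preimage, coe_filter, mem_univ, true_and,
      past, W]
    exact ⟨fun hω s => hω s (Nat.le_of_lt_succ s.2), fun hω s hs => hω ⟨s, by omega⟩⟩
  have hcover : avoidUntil X G (t + n) ⊆ ⋃ w ∈ W, avoidUntil X G (t + n) ∩ past ⁻¹' {w} :=
    fun ω hω => by
      have hω' : ω ∈ avoidUntil X G t := fun s hs => hω s (by omega)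
      rw [hpast] at hω'
      exact Set.mem_biUnion hω' ⟨hω, rfl⟩
  calc μ (avoidUntil X G (t + n))
      ≤ ∑ w ∈ W, μ (avoidUntil X G (t + n) ∩ past ⁻¹' {w}) :=
        (measure_mono hcover).trans (measure_biUnion_finset_le _ _)
    _ ≤ ∑ w ∈ W, (1 - g ^ n) * μ (past ⁻¹' {w}) := sum_le_sum fun w _ => by
        rw [hfiber]
        exact measure_avoidUntil_inter_pathCylinder_le hX hF hFG t _
    _ = (1 - g ^ n) * μ (avoidUntil X G t) := by
        rw [← mul_sum, sum_measure_preimage_singleton _ fun w _ => ?_, hpast]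
        rw [hfiber]
        exact measurableSet_pathCylinder hX _ _

theorem measure_forall_notMem_eq_zero [IsProbabilityMeasure μ] [Fintype S]
    (hX : ∀ t, Measurable (X t))
    (hF : ∀ t h, g * μ (pathCylinder X t h) ≤ μ ({ω | X (t + 1) ω = F (h t)} ∩ pathCylinder X t h))
    (hg : g ≠ 0) (hFG : ∀ z, F^[n] z ∈ G) :
    μ {ω | ∀ t, X t ω ∉ G} = 0 := by
  have hdecay : ∀ k, μ (avoidUntil X G (k * n)) ≤ (1 - g ^ n) ^ k := by
    intro k
    induction k with
    | zero => simpa using prob_le_one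
    | succ k ih =>
      calc μ (avoidUntil X G ((k + 1) * n)) = μ (avoidUntil X G (k * n + n)) := by
            rw [add_one_mul]
        _ ≤ (1 - g ^ n) * μ (avoidUntil X G (k * n)) := measure_avoidUntil_add_le hX hF hFG _
        _ ≤ (1 - g ^ n) * (1 - g ^ n) ^ k := by gcongr
        _ = (1 - g ^ n) ^ (k + 1) := (pow_succ' _ _).symm
  have hlt : 1 - g ^ n < 1 :=
    ENNReal.sub_lt_self ENNReal.one_ne_top one_ne_zero (pow_ne_zero _ hg)
  refine le_antisymm (ge_of_tendsto' (ENNReal.tendsto_pow_atTop_nhds_zero_of_lt_one hlt)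
    fun k => ?_) zero_le
  have hsub : {ω | ∀ t, X t ω ∉ G} ⊆ avoidUntil X G (k * n) := fun ω hω s _ => hω s
  exact (measure_mono hsub).trans (hdecay k)

end Hitting

theorem cfl_finds_solution_as_general {Ω : Type*} [MeasurableSpace Ω]
    (μ : Measure Ω) [IsProbabilityMeasure μ]
    {N M D : ℕ} (hD : 0 < D) (a b : ℝ)
    (ha : a ∈ Set.Ioc (0 : ℝ) 1) (hb : b ∈ Set.Ioc (0 : ℝ) 1)
    (Φ : Fin M → (Fin N → Fin D) → Bool)
    (X : ℕ → Ω → Fin N → Fin D) (hX : ∀ t, Measurable (X t))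
    (hstep : ∀ (t : ℕ) (h : ℕ → Fin N → Fin D) (y : Fin N → Fin D),
      μ ({ω | X (t + 1) ω = y} ∩ {ω | ∀ s ≤ t, X s ω = h s}) =
        ENNReal.ofReal (∏ i : Fin N, cflVec a b Φ h (t + 1) i (y i)) *
          μ {ω | ∀ s ≤ t, X s ω = h s})
    (hsat : ∃ x : Fin N → Fin D, satAll Φ x) :
    μ {ω | ∀ t : ℕ, ¬ satAll Φ (X t ω)} = 0 := by
  obtain ⟨xs, hxs⟩ := hsat
  have hfloor := cflFloor_pos hD ha.1 hb.1
  refine measure_forall_notMem_eq_zero (G := {x | satAll Φ x}) (F := repair Φ xs)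
    (g := ENNReal.ofReal (cflFloor a b D ^ N)) hX (fun t h => ?_)
    (ENNReal.ofReal_pos.2 (pow_pos hfloor N)).ne' (satAll_repair_iterate hxs)
  calc ENNReal.ofReal (cflFloor a b D ^ N) * μ (pathCylinder X t h)
      ≤ ENNReal.ofReal (∏ i, cflVec a b Φ h (t + 1) i (repair Φ xs (h t) i)) *
          μ (pathCylinder X t h) := by
        gcongr
        exact cflFloor_pow_le_prod_cflVec_repair hD ha.1 hb.1 hb.2 xs h t
    _ = _ := (hstep t h _).symm

/-- **Corollary (to Theorem 1).** For any CSP admitting a satisfying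
assignment, the CFL algorithm finds one in almost surely finite time.
The CFL process `X` is characterized by: `X 0` is uniform on assignments,
and conditional on any history `h` up to time `t`, the variables at time
`t+1` are sampled independently from the CFL probability vectors computed
from that history. The conclusion is that the set of trajectories that
never reach a satisfying assignment is null. -/
theorem cfl_finds_solution_as {Ω : Type*} [MeasurableSpace Ω]
    (μ : Measure Ω) [IsProbabilityMeasure μ]
    {N M D : ℕ} (hD : 0 < D) (a b : ℝ)
    (ha : a ∈ Set.Ioc (0 : ℝ) 1) (hb : b ∈ Set.Ioc (0 : ℝ) 1)
    (Φ : Fin M → (Fin N → Fin D) → Bool)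
    (X : ℕ → Ω → Fin N → Fin D) (hX : ∀ t, Measurable (X t))
    (hinit : ∀ y : Fin N → Fin D,
      μ {ω | X 0 ω = y} = ENNReal.ofReal (∏ i : Fin N, cflVec a b Φ (fun _ => y) 0 i (y i)))
    (hstep : ∀ (t : ℕ) (h : ℕ → Fin N → Fin D) (y : Fin N → Fin D),
      μ ({ω | X (t + 1) ω = y} ∩ {ω | ∀ s ≤ t, X s ω = h s}) =
        ENNReal.ofReal (∏ i : Fin N, cflVec a b Φ h (t + 1) i (y i)) *
          μ {ω | ∀ s ≤ t, X s ω = h s})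
    (hsat : ∃ x : Fin N → Fin D, satAll Φ x) :
    μ {ω | ∀ t : ℕ, ¬ satAll Φ (X t ω)} = 0 :=
  cfl_finds_solution_as_general μ hD a b ha hb Φ X hX hstep hsat
end

section
/- For every time t ≥ 0, the CFL state P(t) = (p_1(t),...,p_N(t)) lies in the set S of configurations in which, for each variable i, either p_i is a point mass δ_k for some k ∈ {1,...,D}, or every entry of p_i is at least γ = min(a,b)/(D-1+a/b). -/
open MeasureTheory Finset

/-- **Lemma 1.** At every time `t`, each CFL probability vector is either a
point mass or has all entries at least `γ = min(a,b)/(D-1+a/b)`. -/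
theorem cfl_state_in_S {N M D : ℕ} (hD : 2 ≤ D) (a b : ℝ)
    (ha : a ∈ Set.Ioc (0 : ℝ) 1) (hb : b ∈ Set.Ioc (0 : ℝ) 1)
    (Φ : Fin M → (Fin N → Fin D) → Bool) (h : ℕ → Fin N → Fin D) :
    ∀ (t : ℕ) (i : Fin N),
      (∃ k : Fin D, ∀ j : Fin D,
          cflVec a b Φ h t i j = if j = k then 1 else 0) ∨
        ∀ j : Fin D,
          min a b / ((D : ℝ) - 1 + a / b) ≤ cflVec a b Φ h t i j := by
  obtain ⟨ha0, ha1⟩ := ha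
  obtain ⟨hb0, hb1⟩ := hb
  have hD2 : (2 : ℝ) ≤ (D : ℝ) := by exact_mod_cast hD
  have habpos : 0 < a / b := div_pos ha0 hb0
  have hd : 0 < (D : ℝ) - 1 + a / b := by linarith
  have hmab : min a b ≤ a / b := by
    rcases le_total a b with hh | hh
    · rw [min_eq_left hh, le_div_iff₀ hb0]; nlinarith
    · rw [min_eq_right hh, le_div_iff₀ hb0]; nlinarith
  have hm0 : 0 ≤ min a b := le_min ha0.le hb0.le
  have hm1 : min a b ≤ 1 := le_trans (min_le_left _ _) ha1
  have hg0 : 0 ≤ min a b / ((D : ℝ) - 1 + a / b) := div_nonneg hm0 hd.le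
  intro t i
  induction t with
  | zero =>
      right
      intro j
      show min a b / ((D : ℝ) - 1 + a / b) ≤ 1 / (D : ℝ)
      rw [div_le_div_iff₀ hd (by linarith)]
      nlinarith
  | succ t ih =>
      by_cases hs : varSat Φ i (h t)
      · left
        exact ⟨h t i, fun j => by simp [cflVec, hs]⟩
      · right
        intro j
        have hp : 0 ≤ cflVec a b Φ h t i j := by
          rcases ih with ⟨k, hk⟩ | hγ
          · rw [hk]; split <;> norm_num
          · exact le_trans hg0 (hγ j)
        simp only [cflVec, if_neg hs]
        have hc : min a b ≤ (if j = h t i then a else b) := by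
          split
          · exact min_le_left _ _
          · exact min_le_right _ _
        have h1 : min a b / ((D : ℝ) - 1 + a / b) ≤
            (if j = h t i then a else b) / ((D : ℝ) - 1 + a / b) :=
          div_le_div_of_nonneg_right hc hd.le
        nlinarith
end
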